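/- Let α = (α_1,…,α_k) be a peak composition of n, let 1 ≤ i < k, and let Q be a DIRT of peak shape with row strip shape (α_{k−i+1},…,α_k)^rev and largest entry m. Let Q' be any filling obtained from Q by adjoining the entries m+1, m+2, …, m+α_{k−i} according to the rules: (1) m+1 and m+2 become the first two entries of a new bottom row; (2) each subsequent entry is placed at the end of a row strictly to the right of the last entry placed; (3) no entry is placed at the end of a row of length j if there exists a row of length j+1 below that row. Then Q' is a DIRT of peak shape with row strip shape (α_{k−i},…,α_k)^rev. -/

import Mathlib

open scoped Classical

noncomputable section

namespace QSQ

/-- A box `(c, r)`: column `c`, row `r` (both 1-indexed, rows counted from the bottom). -/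
abbrev Box : Type := ℕ × ℕ

/-- An entry of the marked alphabet: `(i, true)` represents `i′`, `(i, false)` represents `i`. -/
abbrev MEntry : Type := ℕ × Bool

/-- Code realising the marked-alphabet order `1′ < 1 < 2′ < 2 < ⋯`. -/
def mcode (x : MEntry) : ℕ := 2 * x.1 - (if x.2 then 1 else 0)

/-- `α` is a composition of `n`: a list of positive integers summing to `n`. -/
def IsComposition (n : ℕ) (α : List ℕ) : Prop := (∀ a ∈ α, 0 < a) ∧ α.sum = n

/-- All parts are positive, and every part except possibly the last is `> 1`. -/
def PeakShape (α : List ℕ) : Prop :=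
  (∀ a ∈ α, 0 < a) ∧ ∀ i, i + 1 < α.length → 1 < α.getD i 0

/-- `α` is a peak composition of `n`. -/
def IsPeakComposition (n : ℕ) (α : List ℕ) : Prop := IsComposition n α ∧ PeakShape α

/-- Box `(c, r)` belongs to the diagram `D_α`. -/
def inDiagram (α : List ℕ) (b : Box) : Prop :=
  1 ≤ b.1 ∧ 1 ≤ b.2 ∧ b.2 ≤ α.length ∧ b.1 ≤ α.getD (b.2 - 1) 0

instance (α : List ℕ) (b : Box) : Decidable (inDiagram α b) := by
  unfold inDiagram; infer_instance

/-- The diagram `D_α` as a finite set of boxes. -/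
def diagramFinset (α : List ℕ) : Finset Box :=
  ((Finset.Icc 1 (α.foldr max 0)) ×ˢ (Finset.Icc 1 α.length)).filter (fun b => inDiagram α b)

/-- `B` is the set of boxes of the diagram of some peak composition. -/
def IsPeakDiagram (B : Set Box) : Prop :=
  ∃ γ : List ℕ, PeakShape γ ∧ B = {b | inDiagram γ b}

/-- `β` refines `α`: `α` is obtained by summing consecutive entries of `β`. -/
def Refines (β α : List ℕ) : Prop :=
  ∃ L : List (List ℕ), (∀ l ∈ L, l ≠ []) ∧ L.flatten = β ∧ L.map List.sum = α

/-- `set(γ) = {γ₁, γ₁+γ₂, …, γ₁+⋯+γ_{k-1}}`, the proper partial sums. -/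
def setOfComp (γ : List ℕ) : Finset ℕ :=
  ((List.range (γ.length - 1)).map (fun i => (γ.take (i + 1)).sum)).toFinset

/-- `comp_n(X)`: the composition of `n` whose set of proper partial sums is `X ⊆ [n-1]`. -/
def compOf (n : ℕ) (X : Finset ℕ) : List ℕ :=
  let l := (0 :: X.sort (· ≤ ·)) ++ [n]
  (List.range (l.length - 1)).map (fun i => l.getD (i + 1) 0 - l.getD i 0)

/-- `Peak(X) = {i ∈ X : i − 1 ∉ X and i ≠ 1}`. -/
def peakSet (X : Finset ℕ) : Finset ℕ := X.filter (fun i => (i - 1) ∉ X ∧ i ≠ 1)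

/-! ### Marked peak composition tableaux -/

/-- `T` is a marked peak composition tableau of shape `α` (a peak composition of `n`).
Fillings take the default value `(0, false)` outside the diagram. -/
structure IsMPCT (n : ℕ) (α : List ℕ) (T : Box → MEntry) : Prop where
  offDiag : ∀ b, ¬ inDiagram α b → T b = (0, false)
  pos : ∀ b, inDiagram α b → 1 ≤ (T b).1
  /-- (MPCT1) rows weakly increase, with no repeated marked entry in a row. -/
  row_weak : ∀ c c' r, c < c' → inDiagram α (c, r) → inDiagram α (c', r) →
      mcode (T (c, r)) ≤ mcode (T (c', r)) ∧ ((T (c, r)).2 = true → T (c, r) ≠ T (c', r))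
  /-- (MPCT2) the first column strictly increases bottom to top. -/
  col_strict : ∀ r r', r < r' → inDiagram α (1, r) → inDiagram α (1, r') →
      mcode (T (1, r)) < mcode (T (1, r'))
  /-- (MPCT3) the boxes with entries among `{1', 1, …, k', k}` form a peak-composition diagram. -/
  peak_filter : ∀ k ≤ n, IsPeakDiagram {b | inDiagram α b ∧ (T b).1 ≤ k}
  /-- (MPCT4) an unmarked `i` in box `(2,r)` forbids `i` and `i'` in box `(1,r+1)`. -/
  mpct4 : ∀ r, inDiagram α (2, r) → inDiagram α (1, r + 1) → (T (2, r)).2 = false →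
      (T (1, r + 1)).1 ≠ (T (2, r)).1

/-- The number of occurrences of `i` or `i'` in `T`. -/
def wtFun (α : List ℕ) (T : Box → MEntry) (i : ℕ) : ℕ :=
  ((diagramFinset α).filter (fun b => (T b).1 = i)).card

/-- The weight of `T` as a list `(wt(T)₁, …, wt(T)_m)`, `m` the largest value occurring. -/
def wtList (α : List ℕ) (T : Box → MEntry) : List ℕ :=
  (List.range ((diagramFinset α).sup (fun b => (T b).1))).map (fun i => wtFun α T (i + 1))

/-- `T ∈ MPCT(α)`: an MPCT whose weight has no zero entry to the left of a nonzero entry. -/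
def InMPCT (n : ℕ) (α : List ℕ) (T : Box → MEntry) : Prop :=
  IsMPCT n α T ∧ ∀ i j, 1 ≤ i → i < j → wtFun α T i = 0 → wtFun α T j = 0

/-- `T ∈ SMPCT(α)`: each number `1, …, n` appears exactly once (marked or unmarked). -/
def InSMPCT (n : ℕ) (α : List ℕ) (T : Box → MEntry) : Prop :=
  InMPCT n α T ∧ ∀ i, 1 ≤ i → i ≤ n → wtFun α T i = 1

/-! ### Standardisation -/

/-- Secondary key for the standardisation order: marked entries of a given value are taken
bottom to top; unmarked ones from the highest row downwards. -/
def stdk2 (α : List ℕ) (T : Box → MEntry) (b : Box) : ℕ :=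
  if (T b).2 then b.2 else α.length + 1 - b.2

/-- The strict total order on boxes in which standardisation assigns `1, 2, …, n`. -/
def keyLt (α : List ℕ) (T : Box → MEntry) (a b : Box) : Prop :=
  mcode (T a) < mcode (T b) ∨
    (mcode (T a) = mcode (T b) ∧ (stdk2 α T a < stdk2 α T b ∨
      (stdk2 α T a = stdk2 α T b ∧ a.1 < b.1)))

/-- The standardisation map: box `b` receives the rank of `b` in the standardisation order,
keeping its mark. -/
def stdize (α : List ℕ) (T : Box → MEntry) : Box → MEntry := fun b =>
  if inDiagram α b then
    (((diagramFinset α).filter (fun a => keyLt α T a b)).card + 1, (T b).2)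
  else (0, false)

/-- The descent set of `S ∈ SMPCT(α)`: `i` is a descent if `i` is unmarked and strictly below
`i+1`, or `i+1` is marked and weakly below `i`. -/
def DesM (n : ℕ) (α : List ℕ) (S : Box → MEntry) : Finset ℕ :=
  (Finset.Icc 1 (n - 1)).filter (fun i =>
    ∃ b ∈ diagramFinset α, ∃ b' ∈ diagramFinset α, (S b).1 = i ∧ (S b').1 = i + 1 ∧
      (((S b).2 = false ∧ b.2 < b'.2) ∨ ((S b').2 = true ∧ b'.2 ≤ b.2)))

/-- Remove all marks. -/
def unmark (S : Box → MEntry) : Box → ℕ := fun b => (S b).1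

/-! ### Standard (unmarked) tableaux -/

/-- `T` is a standard immaculate tableau of shape `α ⊨ n`: a bijective filling by `1, …, n`
with rows increasing left to right and the first column increasing bottom to top. -/
structure IsSIT (n : ℕ) (α : List ℕ) (T : Box → ℕ) : Prop where
  offDiag : ∀ b, ¬ inDiagram α b → T b = 0
  range : ∀ b, inDiagram α b → 1 ≤ T b ∧ T b ≤ n
  inj : ∀ b b', inDiagram α b → inDiagram α b' → T b = T b' → b = b'
  surj : ∀ i, 1 ≤ i → i ≤ n → ∃ b, inDiagram α b ∧ T b = i
  row_strict : ∀ c c' r, c < c' → inDiagram α (c, r) → inDiagram α (c', r) →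
      T (c, r) < T (c', r)
  col_strict : ∀ r r', r < r' → inDiagram α (1, r) → inDiagram α (1, r') →
      T (1, r) < T (1, r')

/-- (SPCT3)/(SPYCT3): for every `k ≤ n` the boxes with entries `≤ k` form the diagram of a
peak composition. -/
def SPCT3 (n : ℕ) (α : List ℕ) (T : Box → ℕ) : Prop :=
  ∀ k ≤ n, IsPeakDiagram {b | inDiagram α b ∧ T b ≤ k}

/-- Standard peak composition tableau. -/
def IsSPCT (n : ℕ) (α : List ℕ) (T : Box → ℕ) : Prop := IsSIT n α T ∧ SPCT3 n α T

/-- (SPYCT4): if `T(c,r) < T(c+1,r')` for some `r' < r` then box `(c+1,r)` exists and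
`T(c+1,r) < T(c+1,r')`. -/
def SPYCT4 (α : List ℕ) (T : Box → ℕ) : Prop :=
  ∀ c r r', r' < r → inDiagram α (c, r) → inDiagram α (c + 1, r') →
    T (c, r) < T (c + 1, r') → inDiagram α (c + 1, r) ∧ T (c + 1, r) < T (c + 1, r')

/-- Standard Young composition tableau. -/
def IsSYCT (n : ℕ) (α : List ℕ) (T : Box → ℕ) : Prop := IsSIT n α T ∧ SPYCT4 α T

/-- Standard peak Young composition tableau (of peak shape `α ⊨ n`). -/
def IsSPYCT (n : ℕ) (α : List ℕ) (T : Box → ℕ) : Prop :=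
  IsPeakComposition n α ∧ IsSIT n α T ∧ SPCT3 n α T ∧ SPYCT4 α T

/-- `Des↑(T) = {i : i+1 is strictly above i}`. -/
def DesUp (n : ℕ) (α : List ℕ) (T : Box → ℕ) : Finset ℕ :=
  (Finset.Icc 1 (n - 1)).filter (fun i =>
    ∃ b ∈ diagramFinset α, ∃ b' ∈ diagramFinset α, T b = i ∧ T b' = i + 1 ∧ b.2 < b'.2)

def PeakUp (n : ℕ) (α : List ℕ) (T : Box → ℕ) : Finset ℕ := peakSet (DesUp n α T)

/-- `Des←(T) = {i : i+1 is weakly left of i}`. -/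
def DesLeft (n : ℕ) (α : List ℕ) (T : Box → ℕ) : Finset ℕ :=
  (Finset.Icc 1 (n - 1)).filter (fun i =>
    ∃ b ∈ diagramFinset α, ∃ b' ∈ diagramFinset α, T b = i ∧ T b' = i + 1 ∧ b'.1 ≤ b.1)

def PeakLeft (n : ℕ) (α : List ℕ) (T : Box → ℕ) : Finset ℕ := peakSet (DesLeft n α T)

/-! ### Dual immaculate recording tableaux -/

/-- `i+1` lies strictly right of `i` in `Q` (so `i+1` continues the row strip of `i`). -/
def ContR (β : List ℕ) (Q : Box → ℕ) (i : ℕ) : Prop :=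
  ∃ b ∈ diagramFinset β, ∃ b' ∈ diagramFinset β, Q b = i ∧ Q b' = i + 1 ∧ b.1 < b'.1

/-- `Q` is a dual immaculate recording tableau of shape `β ⊨ n`. -/
structure IsDIRT (n : ℕ) (β : List ℕ) (Q : Box → ℕ) : Prop where
  offDiag : ∀ b, ¬ inDiagram β b → Q b = 0
  range : ∀ b, inDiagram β b → 1 ≤ Q b ∧ Q b ≤ n
  inj : ∀ b b', inDiagram β b → inDiagram β b' → Q b = Q b' → b = b'
  surj : ∀ i, 1 ≤ i → i ≤ n → ∃ b, inDiagram β b ∧ Q b = i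
  /-- (DIRT1) -/
  row_strict : ∀ c c' r, c < c' → inDiagram β (c, r) → inDiagram β (c', r) →
      Q (c, r) < Q (c', r)
  /-- (DIRT3) first-column entries increase from top to bottom. -/
  col_top_down : ∀ r r', r < r' → inDiagram β (1, r) → inDiagram β (1, r') →
      Q (1, r') < Q (1, r)
  /-- (DIRT2) row strips start in the first column. -/
  strips_start : ∀ i b, 1 ≤ i → i ≤ n → inDiagram β b → Q b = i →
      (i = 1 ∨ ¬ ContR β Q (i - 1)) → b.1 = 1
  /-- (DIRT4) -/
  dirt4 : ∀ c r r', r' < r → inDiagram β (c, r) → inDiagram β (c, r') →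
      Q (c, r') < Q (c, r) → inDiagram β (c + 1, r') ∧ Q (c + 1, r') < Q (c, r)

/-- `Q` has row strip shape `γ`: the breaks between row strips occur exactly at the proper
partial sums of `γ`. -/
def HasRowStripShape (n : ℕ) (β : List ℕ) (Q : Box → ℕ) (γ : List ℕ) : Prop :=
  IsComposition n γ ∧ ∀ i, 1 ≤ i → i + 1 ≤ n → (ContR β Q i ↔ i ∉ setOfComp γ)

/-! ### Quasisymmetric functions -/

/-- The monomial quasisymmetric function `M_α` in variables indexed by `ℕ`. -/
def Mqs (α : List ℕ) : MvPowerSeries ℕ ℚ := fun d =>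
  if ∃ f : Fin α.length → ℕ, StrictMono f ∧
      d = ∑ j : Fin α.length, Finsupp.single (f j) (α.get j) then 1 else 0

/-- The fundamental quasisymmetric function `F_α = Σ_{β refines α} M_β`. -/
def Fqs (α : List ℕ) : MvPowerSeries ℕ ℚ :=
  ∑ᶠ β ∈ {β : List ℕ | Refines β α}, Mqs β

/-- The peak function `K_α` for a peak composition `α ⊨ n`. -/
def Kfn (n : ℕ) (α : List ℕ) : MvPowerSeries ℕ ℚ :=
  (MvPowerSeries.C : ℚ →+* MvPowerSeries ℕ ℚ) ((2 : ℚ) ^ ((peakSet (setOfComp α)).card + 1)) *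
    ∑ᶠ β ∈ {β : List ℕ | IsComposition n β ∧
      peakSet (setOfComp α) ⊆ symmDiff (setOfComp β) ((setOfComp β).image (· + 1))}, Fqs β

/-- The quasisymmetric Schur Q-function `Q̃_α = Σ_{T ∈ MPCT(α)} M_{wt(T)}`. -/
def Qtilde (n : ℕ) (α : List ℕ) : MvPowerSeries ℕ ℚ :=
  ∑ᶠ T ∈ {T : Box → MEntry | InMPCT n α T}, Mqs (wtList α T)

/-- The peak Young quasisymmetric Schur function
`S̃_α = Σ_{T ∈ SPYCT(α)} K_{comp_n(Peak←(T))}`. -/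
def Stilde (n : ℕ) (α : List ℕ) : MvPowerSeries ℕ ℚ :=
  ∑ᶠ T ∈ {T : Box → ℕ | IsSPYCT n α T}, Kfn n (compOf n (PeakLeft n α T))

/-! ### The insertion algorithm of Allen–Hallam–Mason -/

/-- A tableau given concretely as its list of rows, from bottom to top. -/
def shapeOf (rows : List (List ℕ)) : List ℕ := rows.map List.length

/-- The filling `Box → ℕ` determined by a list of rows (bottom to top). -/
def toFilling (rows : List (List ℕ)) : Box → ℕ := fun b =>
  if 1 ≤ b.1 ∧ 1 ≤ b.2 then (rows.getD (b.2 - 1) []).getD (b.1 - 1) 0 else 0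

/-- The augmented-diagram scan order: columns right to left, each column top to bottom.
(Positions not present in a given row are simply skipped by the insertion step.) -/
def scanList (rows : List (List ℕ)) : List (ℕ × ℕ) :=
  let C := (rows.map List.length).foldr max 0 + 1
  ((List.range C).reverse.map (fun ci =>
    (List.range rows.length).reverse.map (fun ri => (ci + 1, ri + 1)))).flatten

/-- One insertion of `k` (Procedure 3.1 of Allen–Hallam–Mason): walk the scan list looking for
the first box `(c,r)` with `T̄(c-1,r) ≤ k < T̄(c,r)`; place at an augmented box, bump at an
interior box and continue with the bumped entry, or create a new row (in the highest position
in the first column with all first-column entries below smaller than `k`) if the scan ends.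
Returns the new rows and the position of the newly created box. -/
def insertScan : List (ℕ × ℕ) → ℕ → List (List ℕ) → List (List ℕ) × ℕ × ℕ
  | [], k, rows =>
      let j := (rows.takeWhile (fun row => row.headD 0 < k)).length
      (rows.take j ++ [[k]] ++ rows.drop j, (1, j + 1))
  | (c, r) :: rest, k, rows =>
      let row := rows.getD (r - 1) []
      if 2 ≤ c ∧ c ≤ row.length + 1 ∧ row.getD (c - 2) 0 ≤ k then
        if c = row.length + 1 then
          (rows.set (r - 1) (row ++ [k]), (c, r))
        else if k < row.getD (c - 1) 0 then
          insertScan rest (row.getD (c - 1) 0) (rows.set (r - 1) (row.set (c - 1) k))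
        else insertScan rest k rows
      else insertScan rest k rows

/-- The reading word of a filling of shape `α`: rows read top to bottom, left to right. -/
def readingWord (α : List ℕ) (T : Box → ℕ) : List ℕ :=
  ((List.range α.length).reverse.map (fun ri =>
    (List.range (α.getD ri 0)).map (fun ci => T (ci + 1, ri + 1)))).flatten

/-- Reading insertion: insert the letters of `w` successively into the (initially empty)
insertion tableau `P`, recording in `Q` the label of each newly created box. -/
def readingInsertPQ (w : List ℕ) : List (List ℕ) × List (List ℕ) :=
  w.foldl (fun PQ k =>
    let res := insertScan (scanList PQ.1) k PQ.1
    let c := res.2.1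
    let r := res.2.2
    let j := (PQ.2.map List.length).sum + 1
    if c = 1 then
      (res.1, PQ.2.take (r - 1) ++ [[j]] ++ PQ.2.drop (r - 1))
    else
      (res.1, PQ.2.set (r - 1) ((PQ.2.getD (r - 1) []) ++ [j]))) ([], [])

/-! ### Procedure 5.2: generating DIRTs -/

/-- `PlaceSeq rows v lc cnt out`: starting from `rows`, place the `cnt` entries
`v, v+1, …, v+cnt-1` one at a time, each at the end of some row strictly to the right of the
previously placed entry (whose column was `lc`), never placing at the end of a row of length
`j` when some lower row has length `j + 1`; `out` is the result. -/
inductive PlaceSeq : List (List ℕ) → ℕ → ℕ → ℕ → List (List ℕ) → Prop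
  | refl (rows : List (List ℕ)) (v lc : ℕ) : PlaceSeq rows v lc 0 rows
  | step (rows : List (List ℕ)) (v lc cnt : ℕ) (r : ℕ) (out : List (List ℕ))
      (hr : r < rows.length)
      (hright : lc < (rows.getD r []).length + 1)
      (hrule3 : ∀ r' < r, (rows.getD r' []).length ≠ (rows.getD r []).length + 1)
      (next : PlaceSeq (rows.set r ((rows.getD r []) ++ [v])) (v + 1)
        ((rows.getD r []).length + 1) cnt out) :
      PlaceSeq rows v lc (cnt + 1) out



/-!
`Q'` is built from `Q` in two kinds of moves. First `m + 1` goes alone into a new bottom row: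
this lifts `Q` by one row and starts a new row strip. Then `m + 2, …, m + α_{k-i}` are
appended one at a time at the ends of rows (`m + 2` at the end of that new row), each strictly
right of its predecessor. Each appended entry is the new maximum and continues the last row
strip, so the DIRT axioms other than DIRT4 are immediate; DIRT4 asks that in every lower row
reaching the new box's column the box to its right exists, and that is exactly rule (3).
Rows only grow, and the new bottom row has length at least 2, so the shape stays a peak
composition.
-/

lemma getD_le_foldr_max (l : List ℕ) (j : ℕ) : l.getD j 0 ≤ l.foldr max 0 := by
  induction l generalizing j with
  | nil => simp
  | cons a t ih =>
    cases j with
    | zero => exact le_max_left _ _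
    | succ j => exact le_max_of_le_right (ih j)

lemma mem_diagramFinset {β : List ℕ} {b : Box} : b ∈ diagramFinset β ↔ inDiagram β b := by
  simp only [diagramFinset, Finset.mem_filter, Finset.mem_product, Finset.mem_Icc,
    and_iff_right_iff_imp]
  exact fun h => ⟨⟨h.1, h.2.2.2.trans (getD_le_foldr_max _ _)⟩, h.2.1, h.2.2.1⟩

lemma inDiagram_of_le_left {β : List ℕ} {c c' r : ℕ} (h : inDiagram β (c', r)) (hc : 1 ≤ c)
    (hcc : c ≤ c') : inDiagram β (c, r) :=
  ⟨hc, h.2.1, h.2.2.1, hcc.trans h.2.2.2⟩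

lemma IsDIRT.le {n : ℕ} {β : List ℕ} {Q : Box → ℕ} (hd : IsDIRT n β Q) {b : Box}
    (hb : inDiagram β b) : Q b ≤ n :=
  (hd.range b hb).2

lemma mem_setOfComp {γ : List ℕ} {y : ℕ} :
    y ∈ setOfComp γ ↔ ∃ j, j + 1 < γ.length ∧ (γ.take (j + 1)).sum = y := by
  simp only [setOfComp, List.mem_toFinset, List.mem_map, List.mem_range]
  exact exists_congr fun j => and_congr_left' (by omega)

lemma le_sum_of_mem_setOfComp {γ : List ℕ} {y : ℕ} (h : y ∈ setOfComp γ) :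
    y ≤ γ.sum := by
  obtain ⟨j, -, rfl⟩ := mem_setOfComp.1 h
  have := congrArg List.sum (List.take_append_drop (j + 1) γ)
  rw [List.sum_append] at this
  omega

lemma mem_setOfComp_append_singleton {γ : List ℕ} {x y : ℕ} :
    y ∈ setOfComp (γ ++ [x]) ↔ y ∈ setOfComp γ ∨ (γ ≠ [] ∧ y = γ.sum) := by
  simp only [mem_setOfComp, List.length_append, List.length_singleton]
  constructor
  · rintro ⟨j, hj, rfl⟩
    rw [List.take_append_of_le_length (by omega)]
    rcases Nat.lt_or_ge (j + 1) γ.length with h | h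
    · exact Or.inl ⟨j, h, rfl⟩
    · rw [List.take_of_length_le h]
      exact Or.inr ⟨List.ne_nil_of_length_pos (by omega), rfl⟩
  · rintro (⟨j, hj, rfl⟩ | ⟨hne, rfl⟩)
    · exact ⟨j, by omega, by rw [List.take_append_of_le_length (by omega)]⟩
    · have := List.length_pos_iff.2 hne
      refine ⟨γ.length - 1, by omega, ?_⟩
      rw [Nat.sub_add_cancel this, List.take_append_of_le_length le_rfl, List.take_length]

section RowStrips

variable {n : ℕ} {β β' : List ℕ} {Q Q' : Box → ℕ} {γ : List ℕ}

lemma IsComposition.append_singleton {x : ℕ} (h : IsComposition n γ) (hx : 0 < x) :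
    IsComposition (n + x) (γ ++ [x]) :=
  ⟨by simpa [or_imp, forall_and] using ⟨h.1, hx⟩, by simp [h.2]⟩

lemma HasRowStripShape.append_succ {x : ℕ} (hs : HasRowStripShape n β Q (γ ++ [x]))
    (hcont : ∀ i, 1 ≤ i → i < n → (ContR β' Q' i ↔ ContR β Q i)) (hn : ContR β' Q' n) :
    HasRowStripShape (n + 1) β' Q' (γ ++ [x + 1]) := by
  obtain ⟨⟨hpos, hsum⟩, hiff⟩ := hs
  have hx : 0 < x := hpos x (by simp)
  have hγ : γ.sum + x = n := by simpa using hsum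
  refine ⟨⟨fun a ha => ?_, by rw [List.sum_append, List.sum_singleton]; omega⟩,
    fun i hi1 hin => ?_⟩
  · rcases List.mem_append.1 ha with h | h
    · exact hpos a (List.mem_append_left _ h)
    · simp only [List.mem_singleton] at h; omega
  rcases Nat.lt_or_ge i n with h | h
  · rw [hcont i hi1 h, hiff i hi1 h, mem_setOfComp_append_singleton,
      mem_setOfComp_append_singleton]
  · have hi : i = n := by omega
    subst hi
    refine iff_of_true hn fun hmem => ?_
    rcases mem_setOfComp_append_singleton.1 hmem with hmem | ⟨-, hmem⟩
    · have := le_sum_of_mem_setOfComp hmem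
      omega
    · omega

lemma HasRowStripShape.append_one (hs : HasRowStripShape n β Q γ) (hγ : γ ≠ [])
    (hcont : ∀ i, 1 ≤ i → i < n → (ContR β' Q' i ↔ ContR β Q i))
    (hn : ¬ ContR β' Q' n) :
    HasRowStripShape (n + 1) β' Q' (γ ++ [1]) := by
  obtain ⟨hcomp, hiff⟩ := hs
  refine ⟨hcomp.append_singleton one_pos, fun i hi1 hin => ?_⟩
  rcases Nat.lt_or_ge i n with h | h
  · rw [hcont i hi1 h, hiff i hi1 h, mem_setOfComp_append_singleton]
    have := hcomp.2
    simp only [not_or, not_and]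
    exact ⟨fun hm => ⟨hm, fun _ => by omega⟩, And.left⟩
  · have hi : i = n := by omega
    subst hi
    exact iff_of_false hn (not_not_intro
      (mem_setOfComp_append_singleton.2 (Or.inr ⟨hγ, hcomp.2.symm⟩)))

end RowStrips

section AddBox

variable {n : ℕ} {β β' : List ℕ} {Q : Box → ℕ} {b₀ : Box}

lemma update_eq_of_inDiagram {v : ℕ} (hb₀ : ¬ inDiagram β b₀) {b : Box}
    (hb : inDiagram β b) :
    Function.update Q b₀ v b = Q b :=
  Function.update_of_ne (fun h : b = b₀ => hb₀ (h ▸ hb)) _ _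

lemma inDiagram_of_update_le (hD : ∀ b, inDiagram β' b ↔ inDiagram β b ∨ b = b₀)
    {b : Box} (hb : inDiagram β' b) (hle : Function.update Q b₀ (n + 1) b ≤ n) :
    inDiagram β b := by
  rcases (hD b).1 hb with h | rfl
  · exact h
  · simp at hle

lemma contR_update_iff (hD : ∀ b, inDiagram β' b ↔ inDiagram β b ∨ b = b₀)
    (hb₀ : ¬ inDiagram β b₀) {i : ℕ} (hi : i < n) :
    ContR β' (Function.update Q b₀ (n + 1)) i ↔ ContR β Q i := by
  simp only [ContR, mem_diagramFinset]
  constructor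
  · rintro ⟨b, hb, b', hb', h, h', hlt⟩
    have hbβ := inDiagram_of_update_le (n := n) (Q := Q) hD hb (by omega)
    have hbβ' := inDiagram_of_update_le (n := n) (Q := Q) hD hb' (by omega)
    rw [update_eq_of_inDiagram hb₀ hbβ] at h
    rw [update_eq_of_inDiagram hb₀ hbβ'] at h'
    exact ⟨b, hbβ, b', hbβ', h, h', hlt⟩
  · rintro ⟨b, hb, b', hb', h, h', hlt⟩
    exact ⟨b, (hD b).2 (Or.inl hb), b', (hD b').2 (Or.inl hb'),
      by rwa [update_eq_of_inDiagram hb₀ hb], by rwa [update_eq_of_inDiagram hb₀ hb'], hlt⟩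

lemma contR_update_self (hD : ∀ b, inDiagram β' b ↔ inDiagram β b ∨ b = b₀)
    (hb₀ : ¬ inDiagram β b₀) (hlast : ∃ b, inDiagram β b ∧ Q b = n ∧ b.1 < b₀.1) :
    ContR β' (Function.update Q b₀ (n + 1)) n := by
  obtain ⟨b, hb, hQb, hlt⟩ := hlast
  exact ⟨b, mem_diagramFinset.2 ((hD b).2 (Or.inl hb)), b₀,
    mem_diagramFinset.2 ((hD b₀).2 (Or.inr rfl)), by rwa [update_eq_of_inDiagram hb₀ hb],
    Function.update_self .., hlt⟩

lemma row_strict_update (hd : IsDIRT n β Q)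
    (hD : ∀ b, inDiagram β' b ↔ inDiagram β b ∨ b = b₀)
    (hb₀ : ¬ inDiagram β b₀) {c c' r : ℕ} (hcc : c < c') (hb : inDiagram β' (c, r))
    (hb' : inDiagram β' (c', r)) :
    Function.update Q b₀ (n + 1) (c, r) < Function.update Q b₀ (n + 1) (c', r) := by
  rcases (hD _).1 hb' with hb' | rfl
  · have hb := inDiagram_of_le_left hb' hb.1 hcc.le
    rw [update_eq_of_inDiagram hb₀ hb, update_eq_of_inDiagram hb₀ hb']
    exact hd.row_strict c c' r hcc hb hb'
  · have hb : inDiagram β (c, r) := ((hD _).1 hb).resolve_right fun he => by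
      simp only [Prod.mk.injEq] at he
      omega
    have := hd.le hb
    rw [Function.update_self, update_eq_of_inDiagram hb₀ hb]
    omega

lemma dirt4_update (hd : IsDIRT n β Q)
    (hD : ∀ b, inDiagram β' b ↔ inDiagram β b ∨ b = b₀)
    (hb₀ : ¬ inDiagram β b₀)
    (hbelow : ∀ r < b₀.2, inDiagram β (b₀.1, r) → inDiagram β (b₀.1 + 1, r))
    {c r r' : ℕ} (hrr : r' < r) (hb : inDiagram β' (c, r)) (hb' : inDiagram β' (c, r'))
    (hlt : Function.update Q b₀ (n + 1) (c, r') < Function.update Q b₀ (n + 1) (c, r)) :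
    inDiagram β' (c + 1, r') ∧
      Function.update Q b₀ (n + 1) (c + 1, r') < Function.update Q b₀ (n + 1) (c, r) := by
  have hold : ∀ {b}, inDiagram β b → Function.update Q b₀ (n + 1) b = Q b :=
    update_eq_of_inDiagram hb₀
  rcases (hD _).1 hb with hb | rfl
  · rcases (hD _).1 hb' with hb' | he'
    · rw [hold hb, hold hb'] at hlt
      obtain ⟨hb'', hlt'⟩ := hd.dirt4 c r r' hrr hb hb' hlt
      exact ⟨(hD _).2 (Or.inl hb''), by rwa [hold hb'', hold hb]⟩
    · have := hd.le hb
      rw [he', Function.update_self, hold hb] at hlt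
      omega
  · have hb' : inDiagram β (c, r') := ((hD _).1 hb').resolve_right fun he => by
      simp only [Prod.mk.injEq] at he
      omega
    have hright := hbelow r' hrr hb'
    have := hd.le hright
    exact ⟨(hD _).2 (Or.inl hright), by rw [hold hright, Function.update_self]; omega⟩

theorem IsDIRT.update (hd : IsDIRT n β Q)
    (hD : ∀ b, inDiagram β' b ↔ inDiagram β b ∨ b = b₀)
    (hb₀ : ¬ inDiagram β b₀) (hc₀ : 2 ≤ b₀.1)
    (hbelow : ∀ r < b₀.2, inDiagram β (b₀.1, r) → inDiagram β (b₀.1 + 1, r))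
    (hlast : ∃ b, inDiagram β b ∧ Q b = n ∧ b.1 < b₀.1) :
    IsDIRT (n + 1) β' (Function.update Q b₀ (n + 1)) := by
  have hold : ∀ {b}, inDiagram β b → Function.update Q b₀ (n + 1) b = Q b :=
    update_eq_of_inDiagram hb₀
  refine ⟨fun b hb => ?_, fun b hb => ?_, fun b b' hb hb' he => ?_, fun i hi1 hin => ?_,
    fun c c' r hcc hb hb' => row_strict_update hd hD hb₀ hcc hb hb', fun r r' hrr hb hb' => ?_,
    fun i b hi1 hin hb hQb hstart => ?_,
    fun c r r' hrr hb hb' hlt => dirt4_update hd hD hb₀ hbelow hrr hb hb' hlt⟩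
  · rw [hD, not_or] at hb
    rw [Function.update_of_ne hb.2]
    exact hd.offDiag b hb.1
  · rcases (hD b).1 hb with hb | rfl
    · have := hd.range b hb
      rw [hold hb]
      omega
    · simp
  · rcases (hD b).1 hb with hb | rfl <;> rcases (hD b').1 hb' with hb' | rfl
    · rw [hold hb, hold hb'] at he
      exact hd.inj b b' hb hb' he
    · have := hd.le hb
      rw [hold hb, Function.update_self] at he
      omega
    · have := hd.le hb'
      rw [hold hb', Function.update_self] at he
      omega
    · rfl
  · rcases Nat.lt_or_ge n i with h | h
    · exact ⟨b₀, (hD b₀).2 (Or.inr rfl), by rw [Function.update_self]; omega⟩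
    · obtain ⟨b, hb, rfl⟩ := hd.surj i hi1 h
      exact ⟨b, (hD b).2 (Or.inl hb), hold hb⟩
  · have hcol : ∀ {r}, inDiagram β' (1, r) → inDiagram β (1, r) := fun h =>
      ((hD _).1 h).resolve_right fun he => by rw [← he] at hc₀; simp at hc₀
    rw [hold (hcol hb), hold (hcol hb')]
    exact hd.col_top_down r r' hrr (hcol hb) (hcol hb')
  · rcases (hD b).1 hb with hb | rfl
    · have := hd.le hb
      rw [hold hb] at hQb
      refine hd.strips_start i b hi1 (hQb ▸ hd.le hb) hb hQb (hstart.imp_right fun h hc => ?_)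
      exact h ((contR_update_iff hD hb₀ (by omega)).2 hc)
    · have hn : 1 ≤ n := by
        obtain ⟨b, hb, rfl, -⟩ := hlast
        exact (hd.range b hb).1
      rw [Function.update_self] at hQb
      subst hQb
      rcases hstart with h | h
      · omega
      · exact absurd (contR_update_self hD hb₀ hlast) h

end AddBox

section ConsCorner

def consCorner (x : ℕ) (Q : Box → ℕ) : Box → ℕ := fun b =>
  if b = (1, 1) then x else Q (b.1, b.2 - 1)

variable {n : ℕ} {β : List ℕ} {Q : Box → ℕ}

lemma inDiagram_cons_succ {a c r : ℕ} (h : inDiagram β (c, r)) :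
    inDiagram (a :: β) (c, r + 1) := by
  obtain ⟨hc, hr, hrl, hcl⟩ := h
  obtain ⟨r, rfl⟩ := Nat.exists_eq_add_of_le' hr
  exact ⟨hc, by omega, by simpa using hrl, by simpa using hcl⟩

lemma inDiagram_one_cons {b : Box} :
    inDiagram (1 :: β) b ↔ b = (1, 1) ∨ ∃ c r, inDiagram β (c, r) ∧ b = (c, r + 1) := by
  refine ⟨fun ⟨hc, hr, hrl, hcl⟩ => ?_, ?_⟩
  · obtain ⟨c, _ | _ | r⟩ := b
    · simp at hr
    · left
      have hc1 : c = 1 := le_antisymm hcl hc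
      simp [hc1]
    · right
      simp only [List.length_cons] at hrl hcl
      exact ⟨c, r + 1, ⟨hc, by omega, by omega, by simpa using hcl⟩, rfl⟩
  · rintro (rfl | ⟨c, r, h, rfl⟩)
    · exact ⟨le_rfl, le_rfl, by simp, by simp⟩
    · exact inDiagram_cons_succ h

lemma consCorner_one_one (x : ℕ) : consCorner x Q (1, 1) = x := if_pos rfl

lemma consCorner_succ {x c r : ℕ} (h : inDiagram β (c, r)) :
    consCorner x Q (c, r + 1) = Q (c, r) := by
  have hr : 1 ≤ r := h.2.1
  rw [consCorner, if_neg (by simp only [Prod.mk.injEq]; omega)]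
  rfl

lemma exists_of_consCorner_le {b : Box} (hb : inDiagram (1 :: β) b)
    (hle : consCorner (n + 1) Q b ≤ n) : ∃ c r, inDiagram β (c, r) ∧ b = (c, r + 1) := by
  refine (inDiagram_one_cons.1 hb).resolve_left fun h => ?_
  rw [h, consCorner_one_one] at hle
  omega

lemma contR_consCorner_iff {i : ℕ} (hi : i < n) :
    ContR (1 :: β) (consCorner (n + 1) Q) i ↔ ContR β Q i := by
  simp only [ContR, mem_diagramFinset]
  constructor
  · rintro ⟨b, hb, b', hb', h, h', hlt⟩
    obtain ⟨c, r, hcr, rfl⟩ := exists_of_consCorner_le (n := n) (Q := Q) hb (by omega)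
    obtain ⟨c', r', hcr', rfl⟩ := exists_of_consCorner_le (n := n) (Q := Q) hb' (by omega)
    rw [consCorner_succ hcr] at h
    rw [consCorner_succ hcr'] at h'
    exact ⟨_, hcr, _, hcr', h, h', hlt⟩
  · rintro ⟨⟨c, r⟩, hb, ⟨c', r'⟩, hb', h, h', hlt⟩
    exact ⟨_, inDiagram_cons_succ hb, _, inDiagram_cons_succ hb', by rwa [consCorner_succ hb],
      by rwa [consCorner_succ hb'], hlt⟩

lemma not_contR_consCorner (hd : IsDIRT n β Q) : ¬ ContR (1 :: β) (consCorner (n + 1) Q) n := by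
  rintro ⟨b, hb, b', hb', -, h', hlt⟩
  rw [mem_diagramFinset] at hb hb'
  rcases inDiagram_one_cons.1 hb' with rfl | ⟨c, r, hcr, rfl⟩
  · have := hb.1
    simp only [Order.lt_one_iff] at hlt
    omega
  · have := hd.le hcr
    rw [consCorner_succ hcr] at h'
    omega

lemma row_strict_consCorner (hd : IsDIRT n β Q) {c c' r : ℕ} (hcc : c < c')
    (hb : inDiagram (1 :: β) (c, r)) (hb' : inDiagram (1 :: β) (c', r)) :
    consCorner (n + 1) Q (c, r) < consCorner (n + 1) Q (c', r) := by
  rcases inDiagram_one_cons.1 hb' with h | ⟨c₁, r₁, hb₁, h⟩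
  · have := hb.1
    simp only [Prod.ext_iff] at h
    omega
  · obtain ⟨rfl, rfl⟩ := Prod.mk.inj h
    have hb₀ := inDiagram_of_le_left hb₁ hb.1 hcc.le
    rw [consCorner_succ hb₀, consCorner_succ hb₁]
    exact hd.row_strict _ _ _ hcc hb₀ hb₁

lemma col_top_down_consCorner (hd : IsDIRT n β Q) {r r' : ℕ} (hrr : r < r')
    (hb : inDiagram (1 :: β) (1, r)) (hb' : inDiagram (1 :: β) (1, r')) :
    consCorner (n + 1) Q (1, r') < consCorner (n + 1) Q (1, r) := by
  rcases inDiagram_one_cons.1 hb' with h | ⟨c₁, r₁, hb₁, h⟩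
  · have := hb.2.1
    simp only [Prod.ext_iff] at h
    omega
  · obtain ⟨rfl, rfl⟩ := Prod.mk.inj h
    rw [consCorner_succ hb₁]
    rcases inDiagram_one_cons.1 hb with h | ⟨c₂, r₂, hb₂, h⟩
    · have := hd.le hb₁
      rw [h, consCorner_one_one]
      omega
    · obtain ⟨rfl, rfl⟩ := Prod.mk.inj h
      rw [consCorner_succ hb₂]
      exact hd.col_top_down _ _ (by omega) hb₂ hb₁

lemma dirt4_consCorner (hd : IsDIRT n β Q) {c r r' : ℕ} (hrr : r' < r)
    (hb : inDiagram (1 :: β) (c, r)) (hb' : inDiagram (1 :: β) (c, r'))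
    (hlt : consCorner (n + 1) Q (c, r') < consCorner (n + 1) Q (c, r)) :
    inDiagram (1 :: β) (c + 1, r') ∧
      consCorner (n + 1) Q (c + 1, r') < consCorner (n + 1) Q (c, r) := by
  rcases inDiagram_one_cons.1 hb with h | ⟨c₁, r₁, hb₁, h⟩
  · have := hb'.2.1
    simp only [Prod.ext_iff] at h
    omega
  · obtain ⟨rfl, rfl⟩ := Prod.mk.inj h
    rcases inDiagram_one_cons.1 hb' with h | ⟨c₂, r₂, hb₂, h⟩
    · have := hd.le hb₁
      rw [h, consCorner_one_one, consCorner_succ hb₁] at hlt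
      omega
    · obtain ⟨rfl, rfl⟩ := Prod.mk.inj h
      rw [consCorner_succ hb₁, consCorner_succ hb₂] at hlt
      obtain ⟨hb₃, hlt'⟩ := hd.dirt4 _ _ _ (by omega) hb₁ hb₂ hlt
      exact ⟨inDiagram_cons_succ hb₃, by rwa [consCorner_succ hb₃, consCorner_succ hb₁]⟩

theorem IsDIRT.consCorner (hd : IsDIRT n β Q) :
    IsDIRT (n + 1) (1 :: β) (consCorner (n + 1) Q) := by
  refine ⟨fun b hb => ?_, fun b hb => ?_, fun b b' hb hb' he => ?_, fun i hi1 hin => ?_,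
    fun c c' r hcc hb hb' => row_strict_consCorner hd hcc hb hb',
    fun r r' hrr hb hb' => col_top_down_consCorner hd hrr hb hb',
    fun i b hi1 hin hb hQb hstart => ?_,
    fun c r r' hrr hb hb' hlt => dirt4_consCorner hd hrr hb hb' hlt⟩
  · have hne : b ≠ (1, 1) := fun h => hb (inDiagram_one_cons.2 (Or.inl h))
    rw [QSQ.consCorner, if_neg hne]
    refine hd.offDiag _ fun h => hb (inDiagram_one_cons.2 (Or.inr ⟨_, _, h, ?_⟩))
    have := h.2.1
    exact Prod.ext rfl (by simp only at this ⊢; omega)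
  · rcases inDiagram_one_cons.1 hb with rfl | ⟨c, r, h, rfl⟩
    · simp [consCorner_one_one]
    · have := hd.range _ h
      rw [consCorner_succ h]
      omega
  · rcases inDiagram_one_cons.1 hb with rfl | ⟨c, r, h, rfl⟩ <;>
      rcases inDiagram_one_cons.1 hb' with rfl | ⟨c', r', h', rfl⟩
    · rfl
    · have := hd.le h'
      rw [consCorner_one_one, consCorner_succ h'] at he
      omega
    · have := hd.le h
      rw [consCorner_one_one, consCorner_succ h] at he
      omega
    · rw [consCorner_succ h, consCorner_succ h'] at he
      obtain ⟨rfl, rfl⟩ := Prod.mk.inj (hd.inj _ _ h h' he)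
      rfl
  · rcases Nat.lt_or_ge n i with h | h
    · exact ⟨(1, 1), inDiagram_one_cons.2 (Or.inl rfl), by rw [consCorner_one_one]; omega⟩
    · obtain ⟨⟨c, r⟩, hb, rfl⟩ := hd.surj i hi1 h
      exact ⟨(c, r + 1), inDiagram_cons_succ hb, consCorner_succ hb⟩
  · rcases inDiagram_one_cons.1 hb with rfl | ⟨c, r, h, rfl⟩
    · rfl
    · rw [consCorner_succ h] at hQb
      have := hd.le h
      exact hd.strips_start i (c, r) hi1 (hQb ▸ hd.le h) h hQb
        (hstart.imp_right fun hn hc => hn ((contR_consCorner_iff (by omega)).2 hc))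

end ConsCorner

section Rows

variable {rows : List (List ℕ)}

lemma shapeOf_getD (j : ℕ) : (shapeOf rows).getD j 0 = (rows.getD j []).length :=
  List.getD_map (d := []) (f := List.length) (l := rows) (n := j)

lemma inDiagram_shapeOf {b : Box} :
    inDiagram (shapeOf rows) b ↔ 1 ≤ b.1 ∧ 1 ≤ b.2 ∧ b.2 ≤ rows.length ∧
      b.1 ≤ (rows.getD (b.2 - 1) []).length := by
  rw [inDiagram, shapeOf_getD, shapeOf, List.length_map]

lemma toFilling_singleton_cons (x : ℕ) :
    toFilling ([x] :: rows) = consCorner x (toFilling rows) := by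
  funext ⟨c, r⟩
  rcases r with _ | _ | r
  · simp [toFilling, consCorner]
  · rcases c with _ | _ | c <;> simp [toFilling, consCorner]
  · simp [toFilling, consCorner]

variable {r : ℕ} (v : ℕ)

lemma inDiagram_shapeOf_set_append (hr : r < rows.length) {b : Box} :
    inDiagram (shapeOf (rows.set r (rows.getD r [] ++ [v]))) b ↔
      inDiagram (shapeOf rows) b ∨ b = ((rows.getD r []).length + 1, r + 1) := by
  obtain ⟨c, r'⟩ := b
  simp only [inDiagram_shapeOf, List.length_set, Prod.mk.injEq]
  rcases eq_or_ne (r' - 1) r with h | h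
  · simp only [h, List.getD_eq_getElem?_getD, List.getElem?_set_self hr]
    simp only [Option.getD_some, List.length_append, List.length_singleton]
    omega
  · simp only [List.getD_eq_getElem?_getD, List.getElem?_set_ne (Ne.symm h)]
    omega

lemma toFilling_set_append (hr : r < rows.length) :
    toFilling (rows.set r (rows.getD r [] ++ [v])) =
      Function.update (toFilling rows) ((rows.getD r []).length + 1, r + 1) v := by
  funext ⟨c, r'⟩
  by_cases hb : (c, r') = ((rows.getD r []).length + 1, r + 1)
  · obtain ⟨rfl, rfl⟩ := Prod.mk.inj hb
    simp [toFilling, List.getD_eq_getElem?_getD, hr]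
  rw [Function.update_of_ne hb, toFilling, toFilling]
  split_ifs with hcr
  · rcases eq_or_ne (r' - 1) r with h | h
    · have hc : c - 1 ≠ (rows.getD r []).length := fun hc => hb (by rw [Prod.mk.injEq]; omega)
      rw [h, List.getD_eq_getElem?_getD (l := rows.set _ _), List.getElem?_set_self hr]
      simp only [Option.getD_some, List.getD_eq_getElem?_getD, List.getElem?_append]
      rw [List.getD_eq_getElem?_getD] at hc
      split_ifs with hlt
      · rfl
      · rw [List.getElem?_eq_none (by simp only [List.length_singleton]; omega),
          List.getElem?_eq_none (by omega)]
    · simp only [List.getD_eq_getElem?_getD, List.getElem?_set_ne (Ne.symm h)]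
  · rfl

end Rows

lemma PeakShape.cons {β : List ℕ} {a : ℕ} (hp : PeakShape β) (ha : 1 < a) :
    PeakShape (a :: β) := by
  refine ⟨by simpa [(zero_lt_one.trans ha)] using hp.1, fun j hj => ?_⟩
  cases j with
  | zero => exact ha
  | succ j => exact hp.2 j (by simpa using hj)

lemma PeakShape.of_le {β β' : List ℕ} (hp : PeakShape β) (hlen : β'.length = β.length)
    (hle : ∀ j, β.getD j 0 ≤ β'.getD j 0) : PeakShape β' := by
  refine ⟨fun a ha => ?_, fun j hj => (hp.2 j (by omega)).trans_le (hle j)⟩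
  obtain ⟨j, hj, rfl⟩ := List.mem_iff_getElem.1 ha
  have := hle j
  rw [List.getD_eq_getElem _ _ hj, List.getD_eq_getElem _ _ (by omega)] at this
  exact (hp.1 _ (List.getElem_mem _)).trans_le this

namespace PlaceSeq

variable {rows out : List (List ℕ)} {v lc cnt : ℕ}

lemma length_eq (h : PlaceSeq rows v lc cnt out) : out.length = rows.length := by
  induction h with
  | refl => rfl
  | step rows v lc cnt r out hr hright hrule3 next ih => simpa using ih

lemma length_getD_le (h : PlaceSeq rows v lc cnt out) (j : ℕ) :
    (rows.getD j []).length ≤ (out.getD j []).length := by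
  induction h with
  | refl => exact le_rfl
  | step rows v lc cnt r out hr hright hrule3 next ih =>
    refine le_trans ?_ ih
    rcases eq_or_ne r j with rfl | h
    · simp [List.getD_eq_getElem?_getD, hr]
    · simp [List.getD_eq_getElem?_getD, List.getElem?_set_ne h]

lemma peakShape (h : PlaceSeq rows v lc cnt out) (hp : PeakShape (shapeOf rows)) :
    PeakShape (shapeOf out) :=
  hp.of_le (by simp [shapeOf, h.length_eq]) fun j => by
    rw [shapeOf_getD, shapeOf_getD]
    exact h.length_getD_le j

theorem isDIRT_hasRowStripShape (h : PlaceSeq rows v lc cnt out) {n x : ℕ} {γ : List ℕ}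
    (hv : v = n + 1)
    (hd : IsDIRT n (shapeOf rows) (toFilling rows))
    (hs : HasRowStripShape n (shapeOf rows) (toFilling rows) (γ ++ [x]))
    (hlast : ∃ b, inDiagram (shapeOf rows) b ∧ toFilling rows b = n ∧ b.1 ≤ lc) :
    IsDIRT (n + cnt) (shapeOf out) (toFilling out) ∧
      HasRowStripShape (n + cnt) (shapeOf out) (toFilling out) (γ ++ [x + cnt]) := by
  induction h generalizing n x with
  | refl => exact ⟨hd, hs⟩
  | step rows v lc cnt r out hr hright hrule3 next ih =>
    subst hv
    have hD := fun b => inDiagram_shapeOf_set_append (n + 1) hr (b := b)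
    have hb₀ : ¬ inDiagram (shapeOf rows) ((rows.getD r []).length + 1, r + 1) := by
      simp only [inDiagram_shapeOf, Nat.add_sub_cancel]
      omega
    have hbelow : ∀ r' < r + 1, inDiagram (shapeOf rows) ((rows.getD r []).length + 1, r') →
        inDiagram (shapeOf rows) ((rows.getD r []).length + 1 + 1, r') := by
      intro r' hr' hb
      have h1 : 1 ≤ r' := hb.2.1
      have := hrule3 (r' - 1) (by omega)
      simp only [inDiagram_shapeOf] at hb ⊢
      omega
    obtain ⟨b, hb, hQb, hblc⟩ := hlast
    have hlast' : ∃ b, inDiagram (shapeOf rows) b ∧ toFilling rows b = n ∧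
        b.1 < (rows.getD r []).length + 1 := ⟨b, hb, hQb, by omega⟩
    rw [toFilling_set_append (n + 1) hr] at ih
    have hc₀ : 2 ≤ (rows.getD r []).length + 1 := by have : 1 ≤ b.1 := hb.1; omega
    have := ih rfl (hd.update hD hb₀ hc₀ hbelow hlast')
      (hs.append_succ (fun i _ hi => contR_update_iff hD hb₀ hi)
        (contR_update_self hD hb₀ hlast'))
      ⟨_, (hD _).2 (Or.inr rfl), Function.update_self .., le_rfl⟩
    rwa [add_assoc, add_assoc, add_comm 1 cnt] at this

end PlaceSeq

theorem stmt16_general (α : List ℕ)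
    (k i : ℕ) (hk : k = α.length) (hi1 : 1 ≤ i) (hik : i < k)
    (Qrows : List (List ℕ)) (m : ℕ)
    (hQdirt : IsDIRT m (shapeOf Qrows) (toFilling Qrows))
    (hQpeak : PeakShape (shapeOf Qrows))
    (hQrss : HasRowStripShape m (shapeOf Qrows) (toFilling Qrows)
      ((α.drop (k - i)).reverse))
    (Q' : List (List ℕ))
    (ha : 2 ≤ α.getD (k - i - 1) 0)
    (hstep : PlaceSeq ([[m + 1, m + 2]] ++ Qrows) (m + 3) 2
      (α.getD (k - i - 1) 0 - 2) Q') :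
    IsDIRT (m + α.getD (k - i - 1) 0) (shapeOf Q') (toFilling Q') ∧
    PeakShape (shapeOf Q') ∧
    HasRowStripShape (m + α.getD (k - i - 1) 0) (shapeOf Q') (toFilling Q')
      ((α.drop (k - i - 1)).reverse) := by
  set a := α.getD (k - i - 1) 0
  set γ := (α.drop (k - i)).reverse
  have hγ : γ ≠ [] := by
    simp only [γ, ne_eq, List.reverse_eq_nil_iff, List.drop_eq_nil_iff]
    omega
  have hsplit : (α.drop (k - i - 1)).reverse = γ ++ [a] := by
    rw [show a = α[k - i - 1] from List.getD_eq_getElem _ _ (by omega),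
      List.drop_eq_getElem_cons (by omega), List.reverse_cons, Nat.sub_add_cancel (by omega)]
  -- `m + 2` is itself placed by the procedure, at the end of the new bottom row `[m + 1]`.
  have hplace : PlaceSeq ([m + 1] :: Qrows) (m + 2) 1 (a - 1) Q' := by
    rw [show a - 1 = a - 2 + 1 by omega]
    exact .step _ _ _ _ 0 _ (by simp) (by simp) (by simp) (by simpa using hstep)
  have hcorner : IsDIRT (m + 1) (shapeOf ([m + 1] :: Qrows)) (toFilling ([m + 1] :: Qrows)) := by
    rw [toFilling_singleton_cons]
    exact hQdirt.consCorner
  have hstrips : HasRowStripShape (m + 1) (shapeOf ([m + 1] :: Qrows))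
      (toFilling ([m + 1] :: Qrows)) (γ ++ [1]) := by
    rw [toFilling_singleton_cons]
    exact hQrss.append_one hγ (fun _ _ hi => contR_consCorner_iff hi) (not_contR_consCorner hQdirt)
  obtain ⟨hd, hs⟩ := hplace.isDIRT_hasRowStripShape rfl hcorner hstrips
    ⟨(1, 1), by simp [inDiagram_shapeOf], by simp [toFilling_singleton_cons, consCorner_one_one],
      le_rfl⟩
  rw [show m + 1 + (a - 1) = m + a by omega] at hd hs
  rw [show 1 + (a - 1) = a by omega] at hs
  exact ⟨hd, hstep.peakShape (hQpeak.cons one_lt_two), hsplit ▸ hs⟩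

theorem stmt16 (n : ℕ) (α : List ℕ) (hα : IsPeakComposition n α)
    (k i : ℕ) (hk : k = α.length) (hi1 : 1 ≤ i) (hik : i < k)
    (Qrows : List (List ℕ)) (m : ℕ) (hm : m = (α.drop (k - i)).sum)
    (hQdirt : IsDIRT m (shapeOf Qrows) (toFilling Qrows))
    (hQpeak : PeakShape (shapeOf Qrows))
    (hQrss : HasRowStripShape m (shapeOf Qrows) (toFilling Qrows)
      ((α.drop (k - i)).reverse))
    (Q' : List (List ℕ))
    (ha : 2 ≤ α.getD (k - i - 1) 0)
    (hstep : PlaceSeq ([[m + 1, m + 2]] ++ Qrows) (m + 3) 2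
      (α.getD (k - i - 1) 0 - 2) Q') :
    IsDIRT (m + α.getD (k - i - 1) 0) (shapeOf Q') (toFilling Q') ∧
    PeakShape (shapeOf Q') ∧
    HasRowStripShape (m + α.getD (k - i - 1) 0) (shapeOf Q') (toFilling Q')
      ((α.drop (k - i - 1)).reverse) :=
  stmt16_general α k i hk hi1 hik Qrows m hQdirt hQpeak hQrss Q' ha hstep

end QSQ
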